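/- Sub-additivity of diffusion-kernel von Neumann entropy (Proposition 2.2): Let β > 0 and let L¹ and L² be the graph Laplacians of two weighted undirected graphs on the same vertex set {1,…,N}. Then the diffusion-kernel von Neumann entropy of the edge-aggregated graph, whose Laplacian is L¹ + L², satisfies h_β(L¹ + L²) ≤ h_β(L¹) + h_β(L²). -/

import Mathlib

open Matrix Finset

/-- The unnormalized graph Laplacian `L = D - A` of a weighted adjacency matrix. -/
noncomputable def graphLaplacian {N : ℕ} (A : Matrix (Fin N) (Fin N) ℝ) :
    Matrix (Fin N) (Fin N) ℝ :=
  Matrix.diagonal (fun i => ∑ j, A i j) - A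

/-- A weighted adjacency matrix: symmetric, nonnegative entries, and zero diagonal. -/
structure IsAdjacencyMatrix {N : ℕ} (A : Matrix (Fin N) (Fin N) ℝ) : Prop where
  symm : A.IsSymm
  nonneg : ∀ i j, 0 ≤ A i j
  diag_zero : ∀ i, A i i = 0

/-- Diffusion-kernel von Neumann entropy `h_β(L) = -∑ s_k log₂ s_k` with
`s_k = exp(-β λ_k) / ∑_m exp(-β λ_m)`, where `λ_1,…,λ_N` are the eigenvalues (with
multiplicity) of the real symmetric matrix `L`. -/
noncomputable def diffusionVNE {N : ℕ} (β : ℝ) {L : Matrix (Fin N) (Fin N) ℝ}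
    (hL : L.IsHermitian) : ℝ :=
  -∑ k, (Real.exp (-β * hL.eigenvalues k) / ∑ m, Real.exp (-β * hL.eigenvalues m)) *
      Real.logb 2 (Real.exp (-β * hL.eigenvalues k) / ∑ m, Real.exp (-β * hL.eigenvalues m))



/-- Gibbs variational inequality (scalar): for a probability vector `p`,
`H(p) - β ∑ p a ≤ log ∑ exp (-β a)`. -/
lemma gibbs_var {N : ℕ} (β : ℝ) (a p : Fin N → ℝ) (hp : ∀ k, 0 ≤ p k)
    (hp1 : ∑ k, p k = 1) :
    (-∑ k, p k * Real.log (p k)) - β * ∑ k, p k * a k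
      ≤ Real.log (∑ k, Real.exp (-β * a k)) := by
  have hNe : Nonempty (Fin N) := by
    by_contra h
    rw [Finset.univ_eq_empty_iff.2 (not_nonempty_iff.mp h)] at hp1
    simp at hp1
  set Z : ℝ := ∑ k, Real.exp (-β * a k) with hZ
  have hZpos : 0 < Z := Finset.sum_pos (fun k _ => Real.exp_pos _) univ_nonempty
  have key : ∀ k, p k * (-β * a k) - p k * Real.log (p k) - p k * Real.log Z
      ≤ Real.exp (-β * a k) / Z - p k := by
    intro k
    rcases eq_or_lt_of_le (hp k) with h0 | h0
    · rw [← h0]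
      simp
      positivity
    · have ht : 0 < Real.exp (-β * a k) / (p k * Z) := by positivity
      have hlog := Real.log_le_sub_one_of_pos ht
      have hexp : Real.log (Real.exp (-β * a k) / (p k * Z))
          = (-β * a k) - Real.log (p k) - Real.log Z := by
        rw [Real.log_div (Real.exp_ne_zero _) (by positivity),
          Real.log_exp, Real.log_mul (ne_of_gt h0) (ne_of_gt hZpos)]
        ring
      have := mul_le_mul_of_nonneg_left hlog (le_of_lt h0)
      rw [hexp] at this
      have heq : p k * (Real.exp (-β * a k) / (p k * Z) - 1)
          = Real.exp (-β * a k) / Z - p k := by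
        field_simp
      calc p k * (-β * a k) - p k * Real.log (p k) - p k * Real.log Z
          = p k * ((-β * a k) - Real.log (p k) - Real.log Z) := by ring
        _ ≤ p k * (Real.exp (-β * a k) / (p k * Z) - 1) := this
        _ = Real.exp (-β * a k) / Z - p k := heq
  have hsum := Finset.sum_le_sum (fun k (_ : k ∈ univ) => key k)
  have hrhs : ∑ k, (Real.exp (-β * a k) / Z - p k) = 0 := by
    rw [Finset.sum_sub_distrib, ← Finset.sum_div, ← hZ, hp1, div_self (ne_of_gt hZpos)]
    ring
  have hlhs : ∑ k, (p k * (-β * a k) - p k * Real.log (p k) - p k * Real.log Z)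
      = (-β * ∑ k, p k * a k) - (∑ k, p k * Real.log (p k)) - Real.log Z := by
    rw [Finset.sum_sub_distrib, Finset.sum_sub_distrib]
    congr 1
    · congr 1
      rw [Finset.mul_sum]
      exact Finset.sum_congr rfl (fun k _ => by ring)
    · rw [← Finset.sum_mul, hp1, one_mul]
  rw [hlhs, hrhs] at hsum
  linarith

/-- Entropy does not decrease under a doubly stochastic map. -/
lemma entropy_schur {N : ℕ} (D : Fin N → Fin N → ℝ) (s : Fin N → ℝ)
    (hD0 : ∀ j k, 0 ≤ D j k) (hcol : ∀ k, ∑ j, D j k = 1) (hrow : ∀ j, ∑ k, D j k = 1)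
    (hs0 : ∀ j, 0 ≤ s j) :
    -∑ j, s j * Real.log (s j) ≤ -∑ k, (∑ j, s j * D j k) * Real.log (∑ j, s j * D j k) := by
  have jensen : ∀ k, (∑ j, s j * D j k) * Real.log (∑ j, s j * D j k)
      ≤ ∑ j, D j k * (s j * Real.log (s j)) := by
    intro k
    have := Real.convexOn_mul_log.map_sum_le (t := univ) (w := fun j => D j k)
      (p := s) (fun j _ => hD0 j k) (hcol k) (fun j _ => Set.mem_Ici.mpr (hs0 j))
    simp only [smul_eq_mul] at this
    have hsw : (∑ j, s j * D j k) = ∑ j, D j k * s j :=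
      Finset.sum_congr rfl fun j _ => mul_comm _ _
    rw [hsw]
    exact this
  have h2 : ∑ k, (∑ j, s j * D j k) * Real.log (∑ j, s j * D j k)
      ≤ ∑ j, s j * Real.log (s j) := by
    calc ∑ k, (∑ j, s j * D j k) * Real.log (∑ j, s j * D j k)
        ≤ ∑ k, ∑ j, D j k * (s j * Real.log (s j)) :=
          Finset.sum_le_sum (fun k _ => jensen k)
      _ = ∑ j, (∑ k, D j k) * (s j * Real.log (s j)) := by
          rw [Finset.sum_comm]
          exact Finset.sum_congr rfl (fun j _ => by rw [Finset.sum_mul])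
      _ = ∑ j, s j * Real.log (s j) := by
          exact Finset.sum_congr rfl (fun j _ => by rw [hrow j, one_mul])
  linarith


/-- Given symmetric `M`, `K` on `Fin N`, and a probability vector `s`, produce a
probability vector `p` with at least as much entropy as `s` whose mean energy against
the eigenvalues of `K` equals `∑ j, s j * (Uᵀ K U) j j` where `U` diagonalizes `M`. -/
lemma exists_good_p {N : ℕ} {M K : Matrix (Fin N) (Fin N) ℝ}
    (hM : M.IsHermitian) (hK : K.IsHermitian) (s : Fin N → ℝ)
    (hs0 : ∀ k, 0 ≤ s k) (hs1 : ∑ k, s k = 1) :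
    ∃ p : Fin N → ℝ, (∀ k, 0 ≤ p k) ∧ (∑ k, p k) = 1 ∧
      (-∑ j, s j * Real.log (s j)) ≤ (-∑ k, p k * Real.log (p k)) ∧
      ∑ k, p k * hK.eigenvalues k
        = ∑ j, s j * ((star (hM.eigenvectorUnitary : Matrix (Fin N) (Fin N) ℝ) * K
            * (hM.eigenvectorUnitary : Matrix (Fin N) (Fin N) ℝ)) j j) := by
  set U : Matrix (Fin N) (Fin N) ℝ := (hM.eigenvectorUnitary : Matrix (Fin N) (Fin N) ℝ)
  set V : Matrix (Fin N) (Fin N) ℝ := (hK.eigenvectorUnitary : Matrix (Fin N) (Fin N) ℝ)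
  set W : Matrix (Fin N) (Fin N) ℝ := star U * V with hW
  have hUmem : U ∈ Matrix.unitaryGroup (Fin N) ℝ := hM.eigenvectorUnitary.2
  have hVmem : V ∈ Matrix.unitaryGroup (Fin N) ℝ := hK.eigenvectorUnitary.2
  have hWmem : W ∈ Matrix.unitaryGroup (Fin N) ℝ :=
    Submonoid.mul_mem _ ((Unitary.star_mem_iff).mpr hUmem) hVmem
  have hWWs : W * star W = 1 := (Matrix.mem_unitaryGroup_iff).mp hWmem
  have hWsW : star W * W = 1 := (Matrix.mem_unitaryGroup_iff').mp hWmem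
  set D : Fin N → Fin N → ℝ := fun j k => (W j k) ^ 2 with hD
  have hD0 : ∀ j k, 0 ≤ D j k := fun j k => sq_nonneg _
  have hrow : ∀ j, ∑ k, D j k = 1 := by
    intro j
    have := congrArg (fun (X : Matrix (Fin N) (Fin N) ℝ) => X j j) hWWs
    simp only [Matrix.mul_apply, Matrix.one_apply_eq, Matrix.conjTranspose_apply,
      star_trivial] at this
    rw [← this]
    exact Finset.sum_congr rfl fun k _ => (sq (W j k)).symm ▸ by ring
  have hcol : ∀ k, ∑ j, D j k = 1 := by
    intro k
    have := congrArg (fun (X : Matrix (Fin N) (Fin N) ℝ) => X k k) hWsW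
    simp only [Matrix.mul_apply, Matrix.one_apply_eq, Matrix.conjTranspose_apply,
      star_trivial] at this
    rw [← this]
    refine Finset.sum_congr rfl fun j _ => ?_
    simp only [hD, Matrix.star_apply, star_trivial]
    ring
  -- energy identity: (star U * K * U) j j = ∑ k, D j k * eigenvalues k
  have henergy : ∀ j, (star U * K * U) j j = ∑ k, D j k * hK.eigenvalues k := by
    intro j
    have hKspec : K = V * Matrix.diagonal hK.eigenvalues * star V := by
      have := hK.spectral_theorem
      simpa [RCLike.ofReal_real_eq_id] using this
    have hstarW : star W = star V * U := by rw [hW, Matrix.star_mul, star_star]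
    have : star U * K * U = W * Matrix.diagonal hK.eigenvalues * star W := by
      rw [hstarW, hW]
      conv_lhs => rw [hKspec]
      noncomm_ring
    rw [this]
    rw [Matrix.mul_apply]
    have hdiag : ∀ i, (W * Matrix.diagonal hK.eigenvalues) j i = W j i * hK.eigenvalues i := by
      intro i
      rw [Matrix.mul_apply]
      simp [Matrix.diagonal_apply, Finset.sum_ite_eq]
    calc ∑ i, (W * Matrix.diagonal hK.eigenvalues) j i * (star W) i j
        = ∑ i, (W j i) ^ 2 * hK.eigenvalues i := by
          refine Finset.sum_congr rfl fun i _ => ?_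
          rw [hdiag i]
          simp only [Matrix.star_apply, star_trivial]
          ring
      _ = ∑ k, D j k * hK.eigenvalues k := rfl
  refine ⟨fun k => ∑ j, s j * D j k, fun k => Finset.sum_nonneg fun j _ =>
    mul_nonneg (hs0 j) (hD0 j k), ?_, ?_, ?_⟩
  · rw [Finset.sum_comm]
    calc ∑ j, ∑ k, s j * D j k = ∑ j, s j * ∑ k, D j k := by
          exact Finset.sum_congr rfl fun j _ => (Finset.mul_sum _ _ _).symm
      _ = 1 := by simp only [hrow, mul_one]; exact hs1
  · exact entropy_schur D s hD0 hcol hrow hs0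
  · calc ∑ k, (∑ j, s j * D j k) * hK.eigenvalues k
        = ∑ k, ∑ j, s j * (D j k * hK.eigenvalues k) := by
          refine Finset.sum_congr rfl fun k _ => ?_
          rw [Finset.sum_mul]
          exact Finset.sum_congr rfl fun j _ => by ring
      _ = ∑ j, ∑ k, s j * (D j k * hK.eigenvalues k) := Finset.sum_comm
      _ = ∑ j, s j * ((star U * K * U) j j) := by
          refine Finset.sum_congr rfl fun j _ => ?_
          rw [henergy j, Finset.mul_sum]

/-- The graph Laplacian of a weighted adjacency matrix is positive semidefinite. -/
lemma laplacian_posSemidef {N : ℕ} {A : Matrix (Fin N) (Fin N) ℝ}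
    (hA : IsAdjacencyMatrix A) (hL : (graphLaplacian A).IsHermitian) :
    (graphLaplacian A).PosSemidef := by
  refine Matrix.PosSemidef.of_dotProduct_mulVec_nonneg hL fun x => ?_
  have hstar : star x = x := by
    funext i; simp
  rw [hstar]
  have hmv : ∀ i, (graphLaplacian A *ᵥ x) i = (∑ j, A i j) * x i - ∑ j, A i j * x j := by
    intro i
    have h1 : (Matrix.diagonal (fun i => ∑ j, A i j) *ᵥ x) i = (∑ j, A i j) * x i :=
      Matrix.mulVec_diagonal _ _ _
    have h2 : (A *ᵥ x) i = ∑ j, A i j * x j := by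
      simp [Matrix.mulVec, dotProduct]
    simp [graphLaplacian, Matrix.sub_mulVec, h1, h2]
  have hdot : x ⬝ᵥ (graphLaplacian A *ᵥ x)
      = ∑ i, ∑ j, (A i j * x i ^ 2 - A i j * (x i * x j)) := by
    rw [dotProduct]
    refine Finset.sum_congr rfl fun i _ => ?_
    rw [hmv i, Finset.sum_sub_distrib, mul_sub]
    congr 1
    · rw [Finset.sum_mul, Finset.mul_sum]
      exact Finset.sum_congr rfl fun j _ => by ring
    · rw [Finset.mul_sum]
      exact Finset.sum_congr rfl fun j _ => by ring
  have hswap : ∑ i, ∑ j, A i j * x j ^ 2 = ∑ i, ∑ j, A i j * x i ^ 2 := by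
    rw [Finset.sum_comm]
    exact Finset.sum_congr rfl fun j _ => Finset.sum_congr rfl fun i _ => by
      rw [hA.symm.apply i j]
  have hT : ∑ i, ∑ j, A i j * (x i - x j) ^ 2
      = ∑ i, ∑ j, (A i j * x i ^ 2 + A i j * x j ^ 2 - 2 * (A i j * (x i * x j))) :=
    Finset.sum_congr rfl fun i _ => Finset.sum_congr rfl fun j _ => by ring
  have hTnn : 0 ≤ ∑ i, ∑ j, A i j * (x i - x j) ^ 2 :=
    Finset.sum_nonneg fun i _ => Finset.sum_nonneg fun j _ =>
      mul_nonneg (hA.nonneg i j) (sq_nonneg _)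
  have hsplit : ∑ i, ∑ j, (A i j * x i ^ 2 + A i j * x j ^ 2 - 2 * (A i j * (x i * x j)))
      = (∑ i, ∑ j, A i j * x i ^ 2) + (∑ i, ∑ j, A i j * x j ^ 2)
        - 2 * (∑ i, ∑ j, A i j * (x i * x j)) := by
    simp only [Finset.sum_add_distrib, Finset.sum_sub_distrib, ← Finset.mul_sum]
  have hdots : ∑ i, ∑ j, (A i j * x i ^ 2 - A i j * (x i * x j))
      = (∑ i, ∑ j, A i j * x i ^ 2) - (∑ i, ∑ j, A i j * (x i * x j)) := by
    simp only [Finset.sum_sub_distrib]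
  rw [hdot, hdots]
  rw [hT, hsplit, hswap] at hTnn
  linarith

/-- The aggregate Laplacian has a zero eigenvalue (rows sum to zero). -/
lemma exists_eigenvalue_zero {N : ℕ} (hN : 0 < N) (A₁ A₂ : Matrix (Fin N) (Fin N) ℝ)
    (hL₁₂ : (graphLaplacian A₁ + graphLaplacian A₂).IsHermitian) :
    ∃ k, hL₁₂.eigenvalues k = 0 := by
  have hones : (graphLaplacian A₁ + graphLaplacian A₂) *ᵥ (fun _ => (1 : ℝ)) = 0 := by
    funext i
    have h1 : ∀ (A : Matrix (Fin N) (Fin N) ℝ), (graphLaplacian A *ᵥ fun _ => (1 : ℝ)) i = 0 := by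
      intro A
      have hd : (Matrix.diagonal (fun i => ∑ j, A i j) *ᵥ fun _ => (1 : ℝ)) i
          = (∑ j, A i j) * 1 := Matrix.mulVec_diagonal _ _ _
      have h2 : (A *ᵥ fun _ => (1 : ℝ)) i = ∑ j, A i j * 1 := by
        simp [Matrix.mulVec, dotProduct]
      simp only [graphLaplacian, Matrix.sub_mulVec, Pi.sub_apply, hd, h2, mul_one]
      simp
    simp [Matrix.add_mulVec, h1]
  have hdet : (graphLaplacian A₁ + graphLaplacian A₂).det = 0 := by
    rw [← Matrix.exists_mulVec_eq_zero_iff]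
    refine ⟨fun _ => (1 : ℝ), ?_, hones⟩
    intro h
    have := congrFun h ⟨0, hN⟩
    simp at this
  have hprod := hL₁₂.det_eq_prod_eigenvalues
  rw [hdet] at hprod
  have := (Finset.prod_eq_zero_iff).mp hprod.symm
  obtain ⟨k, _, hk⟩ := this
  exact ⟨k, by exact_mod_cast hk⟩

/-- The entropy of the Gibbs distribution equals `log Z + β ⟨λ⟩`. -/
lemma Hs_eq {N : ℕ} (hNe : Nonempty (Fin N)) (β : ℝ) (lam : Fin N → ℝ) :
    -∑ k, (Real.exp (-β * lam k) / ∑ m, Real.exp (-β * lam m)) *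
        Real.log (Real.exp (-β * lam k) / ∑ m, Real.exp (-β * lam m))
      = Real.log (∑ m, Real.exp (-β * lam m))
        + β * ∑ k, (Real.exp (-β * lam k) / ∑ m, Real.exp (-β * lam m)) * lam k := by
  set Z : ℝ := ∑ m, Real.exp (-β * lam m) with hZ
  have hZpos : 0 < Z := Finset.sum_pos (fun k _ => Real.exp_pos _) Finset.univ_nonempty
  have hs1 : ∑ k, Real.exp (-β * lam k) / Z = 1 := by
    rw [← Finset.sum_div, ← hZ, div_self (ne_of_gt hZpos)]
  have hterm : ∀ k, (Real.exp (-β * lam k) / Z) * Real.log (Real.exp (-β * lam k) / Z)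
      = -(β * ((Real.exp (-β * lam k) / Z) * lam k))
        - (Real.exp (-β * lam k) / Z) * Real.log Z := by
    intro k
    rw [Real.log_div (Real.exp_ne_zero _) (ne_of_gt hZpos), Real.log_exp]
    ring
  calc -∑ k, (Real.exp (-β * lam k) / Z) * Real.log (Real.exp (-β * lam k) / Z)
      = -∑ k, (-(β * ((Real.exp (-β * lam k) / Z) * lam k))
          - (Real.exp (-β * lam k) / Z) * Real.log Z) := by
        rw [Finset.sum_congr rfl fun k _ => hterm k]
    _ = β * (∑ k, (Real.exp (-β * lam k) / Z) * lam k)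
        + (∑ k, Real.exp (-β * lam k) / Z) * Real.log Z := by
        rw [Finset.sum_sub_distrib, Finset.sum_neg_distrib, ← Finset.mul_sum,
          ← Finset.sum_mul]
        ring
    _ = Real.log Z + β * ∑ k, (Real.exp (-β * lam k) / Z) * lam k := by
        rw [hs1]; ring

/-- `diffusionVNE` in terms of natural-log entropy. -/
lemma dVNE_eq {N : ℕ} (β : ℝ) {L : Matrix (Fin N) (Fin N) ℝ} (hL : L.IsHermitian) :
    diffusionVNE β hL
      = (-∑ k, (Real.exp (-β * hL.eigenvalues k) / ∑ m, Real.exp (-β * hL.eigenvalues m)) *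
          Real.log (Real.exp (-β * hL.eigenvalues k) / ∑ m, Real.exp (-β * hL.eigenvalues m)))
        / Real.log 2 := by
  unfold diffusionVNE
  rw [neg_div, Finset.sum_div]
  congr 1
  refine Finset.sum_congr rfl fun k _ => ?_
  rw [Real.logb, mul_div_assoc]

/-- **Sub-additivity of diffusion-kernel von Neumann entropy.**
If `L¹` and `L²` are graph Laplacians of weighted undirected graphs on the same vertex
set, then the diffusion-kernel VNE of the edge-aggregated graph, whose Laplacian is
`L¹ + L²`, satisfies `h_β(L¹ + L²) ≤ h_β(L¹) + h_β(L²)`. -/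
theorem diffusionVNE_subadditive {N : ℕ} (β : ℝ) (hβ : 0 < β)
    (A₁ A₂ : Matrix (Fin N) (Fin N) ℝ)
    (hA₁ : IsAdjacencyMatrix A₁) (hA₂ : IsAdjacencyMatrix A₂)
    (hL₁ : (graphLaplacian A₁).IsHermitian)
    (hL₂ : (graphLaplacian A₂).IsHermitian)
    (hL₁₂ : (graphLaplacian A₁ + graphLaplacian A₂).IsHermitian) :
    diffusionVNE β hL₁₂ ≤ diffusionVNE β hL₁ + diffusionVNE β hL₂ := by
  rcases Nat.eq_zero_or_pos N with hN | hN
  · subst hN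
    simp [diffusionVNE]
  have hNe : Nonempty (Fin N) := ⟨⟨0, hN⟩⟩
  have hlog2 : 0 < Real.log 2 := Real.log_pos (by norm_num)
  rw [dVNE_eq β hL₁₂, dVNE_eq β hL₁, dVNE_eq β hL₂, ← add_div,
    div_le_div_iff_of_pos_right hlog2]
  -- abbreviations (all facts stated in fully written-out form)
  have hZμpos : 0 < ∑ m, Real.exp (-β * hL₁₂.eigenvalues m) :=
    Finset.sum_pos (fun k _ => Real.exp_pos _) Finset.univ_nonempty
  have hs0 : ∀ k, 0 ≤ Real.exp (-β * hL₁₂.eigenvalues k)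
      / ∑ m, Real.exp (-β * hL₁₂.eigenvalues m) := fun k => by positivity
  have hs1 : ∑ k, Real.exp (-β * hL₁₂.eigenvalues k)
      / ∑ m, Real.exp (-β * hL₁₂.eigenvalues m) = 1 := by
    rw [← Finset.sum_div, div_self (ne_of_gt hZμpos)]
  -- zero eigenvalue of the aggregate Laplacian
  have hlogZμ : 0 ≤ Real.log (∑ m, Real.exp (-β * hL₁₂.eigenvalues m)) := by
    obtain ⟨k, hk⟩ := exists_eigenvalue_zero hN A₁ A₂ hL₁₂
    refine Real.log_nonneg ?_
    calc (1 : ℝ) = Real.exp (-β * hL₁₂.eigenvalues k) := by rw [hk]; simp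
      _ ≤ ∑ m, Real.exp (-β * hL₁₂.eigenvalues m) :=
        Finset.single_le_sum (f := fun m => Real.exp (-β * hL₁₂.eigenvalues m))
          (fun m _ => (Real.exp_pos _).le) (Finset.mem_univ k)
  -- good probability vectors from the doubly stochastic mixing
  obtain ⟨p1, hp10, hp11, hp1H, hp1E⟩ := exists_good_p hL₁₂ hL₁
    (fun k => Real.exp (-β * hL₁₂.eigenvalues k)
      / ∑ m, Real.exp (-β * hL₁₂.eigenvalues m)) hs0 hs1
  obtain ⟨p2, hp20, hp21, hp2H, hp2E⟩ := exists_good_p hL₁₂ hL₂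
    (fun k => Real.exp (-β * hL₁₂.eigenvalues k)
      / ∑ m, Real.exp (-β * hL₁₂.eigenvalues m)) hs0 hs1
  -- Gibbs variational bounds
  have hg1 := gibbs_var β hL₁.eigenvalues p1 hp10 hp11
  have hg2 := gibbs_var β hL₂.eigenvalues p2 hp20 hp21
  -- entropy identities
  have hHμ := Hs_eq hNe β hL₁₂.eigenvalues
  have hHa := Hs_eq hNe β hL₁.eigenvalues
  have hHb := Hs_eq hNe β hL₂.eigenvalues
  -- nonnegative mean energies for the summands
  have hEa : 0 ≤ β * ∑ k, (Real.exp (-β * hL₁.eigenvalues k)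
      / ∑ m, Real.exp (-β * hL₁.eigenvalues m)) * hL₁.eigenvalues k :=
    mul_nonneg hβ.le (Finset.sum_nonneg fun k _ => mul_nonneg (by positivity)
      (by exact (laplacian_posSemidef hA₁ hL₁).eigenvalues_nonneg k))
  have hEb : 0 ≤ β * ∑ k, (Real.exp (-β * hL₂.eigenvalues k)
      / ∑ m, Real.exp (-β * hL₂.eigenvalues m)) * hL₂.eigenvalues k :=
    mul_nonneg hβ.le (Finset.sum_nonneg fun k _ => mul_nonneg (by positivity)
      (by exact (laplacian_posSemidef hA₂ hL₂).eigenvalues_nonneg k))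
  -- the two conjugated energies add up to the eigenvalues of the sum
  have hqsum :
      (∑ j, (Real.exp (-β * hL₁₂.eigenvalues j) / ∑ m, Real.exp (-β * hL₁₂.eigenvalues m)) *
        ((star (hL₁₂.eigenvectorUnitary : Matrix (Fin N) (Fin N) ℝ) * graphLaplacian A₁ *
          (hL₁₂.eigenvectorUnitary : Matrix (Fin N) (Fin N) ℝ)) j j))
      + (∑ j, (Real.exp (-β * hL₁₂.eigenvalues j) / ∑ m, Real.exp (-β * hL₁₂.eigenvalues m)) *
        ((star (hL₁₂.eigenvectorUnitary : Matrix (Fin N) (Fin N) ℝ) * graphLaplacian A₂ *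
          (hL₁₂.eigenvectorUnitary : Matrix (Fin N) (Fin N) ℝ)) j j))
      = ∑ j, (Real.exp (-β * hL₁₂.eigenvalues j) / ∑ m, Real.exp (-β * hL₁₂.eigenvalues m)) *
          hL₁₂.eigenvalues j := by
    have hdiagM : star (hL₁₂.eigenvectorUnitary : Matrix (Fin N) (Fin N) ℝ)
        * (graphLaplacian A₁ + graphLaplacian A₂)
        * (hL₁₂.eigenvectorUnitary : Matrix (Fin N) (Fin N) ℝ)
        = Matrix.diagonal hL₁₂.eigenvalues := by
      have := hL₁₂.conjStarAlgAut_star_eigenvectorUnitary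
      simpa [RCLike.ofReal_real_eq_id] using this
    rw [← Finset.sum_add_distrib]
    refine Finset.sum_congr rfl fun j _ => ?_
    have hadd := congrArg (fun (X : Matrix (Fin N) (Fin N) ℝ) => X j j) hdiagM
    rw [Matrix.mul_add, Matrix.add_mul] at hadd
    simp only [Matrix.add_apply, Matrix.diagonal_apply_eq] at hadd
    rw [← mul_add, hadd]
  -- assemble everything with linear arithmetic
  have hb1 : β * (∑ k, p1 k * hL₁.eigenvalues k)
      = β * ∑ j, (Real.exp (-β * hL₁₂.eigenvalues j)
          / ∑ m, Real.exp (-β * hL₁₂.eigenvalues m)) *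
        ((star (hL₁₂.eigenvectorUnitary : Matrix (Fin N) (Fin N) ℝ) * graphLaplacian A₁ *
          (hL₁₂.eigenvectorUnitary : Matrix (Fin N) (Fin N) ℝ)) j j) := by rw [hp1E]
  have hb2 : β * (∑ k, p2 k * hL₂.eigenvalues k)
      = β * ∑ j, (Real.exp (-β * hL₁₂.eigenvalues j)
          / ∑ m, Real.exp (-β * hL₁₂.eigenvalues m)) *
        ((star (hL₁₂.eigenvectorUnitary : Matrix (Fin N) (Fin N) ℝ) * graphLaplacian A₂ *
          (hL₁₂.eigenvectorUnitary : Matrix (Fin N) (Fin N) ℝ)) j j) := by rw [hp2E]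
  have hbsum : β * (∑ j, (Real.exp (-β * hL₁₂.eigenvalues j)
          / ∑ m, Real.exp (-β * hL₁₂.eigenvalues m)) *
        ((star (hL₁₂.eigenvectorUnitary : Matrix (Fin N) (Fin N) ℝ) * graphLaplacian A₁ *
          (hL₁₂.eigenvectorUnitary : Matrix (Fin N) (Fin N) ℝ)) j j))
      + β * (∑ j, (Real.exp (-β * hL₁₂.eigenvalues j)
          / ∑ m, Real.exp (-β * hL₁₂.eigenvalues m)) *
        ((star (hL₁₂.eigenvectorUnitary : Matrix (Fin N) (Fin N) ℝ) * graphLaplacian A₂ *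
          (hL₁₂.eigenvectorUnitary : Matrix (Fin N) (Fin N) ℝ)) j j))
      = β * ∑ j, (Real.exp (-β * hL₁₂.eigenvalues j)
          / ∑ m, Real.exp (-β * hL₁₂.eigenvalues m)) * hL₁₂.eigenvalues j := by
    rw [← mul_add, hqsum]
  linarith
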